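/- Let A, B, C be three non-collinear points in the Euclidean plane, with incenter I and excenters E_A, E_B, E_C. Then dist(E_A,E_B) · dist(E_A,C) = dist(E_A,A) · dist(E_A,I) and dist(E_A,A) · dist(E_A,I) = dist(E_A,E_C) · dist(E_A,B). -/

import Mathlib

/-- The incenter of the triangle `A B C`. -/
noncomputable def incenterPt (A B C : EuclideanSpace ℝ (Fin 2)) : EuclideanSpace ℝ (Fin 2) :=
  (dist B C + dist C A + dist A B)⁻¹ •
    (dist B C • A + dist C A • B + dist A B • C)

/-- The excenter of the triangle `A B C` opposite the first vertex `A`. -/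
noncomputable def excenterPt (A B C : EuclideanSpace ℝ (Fin 2)) : EuclideanSpace ℝ (Fin 2) :=
  (-dist B C + dist C A + dist A B)⁻¹ •
    ((-dist B C) • A + dist C A • B + dist A B • C)

/-!
In barycentric coordinates with respect to `ABC`, a displacement with weights `(u, v, w)`,
`u + v + w = 0`, has squared length `-(v w a² + w u b² + u v c²)`. This gives every squared
distance from `E_A` to `A`, `C`, `I` and `E_B` as a rational function of `a, b, c`, and both
`|E_A E_B|·|E_A C|` and `|E_A A|·|E_A I|` come out as `2abc/(b + c - a)`, the power of `E_A`
with respect to the circle on the diameter `I E_B` (which passes through `A` and `C`).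
Exchanging `B` and `C` fixes `E_A` and swaps `E_B` with `E_C`, giving the second identity.
-/

section Barycentric

variable {V : Type*} [NormedAddCommGroup V] [InnerProductSpace ℝ V]

theorem norm_smul_add_smul_add_smul_sq_of_add_add_eq_zero (A B C : V) {u v w : ℝ}
    (h : u + v + w = 0) :
    ‖u • A + v • B + w • C‖ ^ 2 =
      -(v * w * dist B C ^ 2 + w * u * dist C A ^ 2 + u * v * dist A B ^ 2) := by
  obtain rfl : u = -v - w := by linarith
  rw [show (-v - w) • A + v • B + w • C = v • (B - A) + w • (C - A) by module,
    dist_eq_norm, show B - C = (B - A) - (C - A) by abel, dist_eq_norm, dist_eq_norm',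
    norm_add_sq_real, norm_sub_sq_real, norm_smul, norm_smul, real_inner_smul_left,
    real_inner_smul_right, mul_pow, mul_pow, Real.norm_eq_abs, Real.norm_eq_abs, sq_abs, sq_abs]
  ring

theorem dist_sq_of_barycentric {A B C P Q : V} {x y z x' y' z' : ℝ}
    (hP : P = x • A + y • B + z • C) (hQ : Q = x' • A + y' • B + z' • C)
    (h : x + y + z = 1) (h' : x' + y' + z' = 1) :
    dist P Q ^ 2 = -((y - y') * (z - z') * dist B C ^ 2 + (z - z') * (x - x') * dist C A ^ 2
      + (x - x') * (y - y') * dist A B ^ 2) := by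
  rw [dist_eq_norm, hP, hQ, ← norm_smul_add_smul_add_smul_sq_of_add_add_eq_zero A B C
    (by linarith : (x - x') + (y - y') + (z - z') = 0)]
  congr 2
  module

theorem inv_smul_add_smul_add_smul (A B C : V) (x y z : ℝ) :
    (x + y + z)⁻¹ • (x • A + y • B + z • C) =
      (x / (x + y + z)) • A + (y / (x + y + z)) • B + (z / (x + y + z)) • C := by
  simp only [smul_add, smul_smul, div_eq_inv_mul]

end Barycentric

theorem dist_lt_dist_add_dist_of_not_collinear {V P : Type*} [NormedAddCommGroup V]
    [NormedSpace ℝ V] [StrictConvexSpace ℝ V] [MetricSpace P] [NormedAddTorsor V P] {A B C : P}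
    (h : ¬ Collinear ℝ {A, B, C}) : dist A C < dist A B + dist B C :=
  dist_lt_dist_add_dist_iff.2 fun hw => h hw.collinear

section Triangle

variable (A B C : EuclideanSpace ℝ (Fin 2))

theorem excenterPt_eq_barycentric :
    excenterPt A B C =
      (-dist B C / (-dist B C + dist C A + dist A B)) • A
        + (dist C A / (-dist B C + dist C A + dist A B)) • B
        + (dist A B / (-dist B C + dist C A + dist A B)) • C :=
  inv_smul_add_smul_add_smul A B C _ _ _

theorem incenterPt_eq_barycentric :
    incenterPt A B C =
      (dist B C / (dist B C + dist C A + dist A B)) • A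
        + (dist C A / (dist B C + dist C A + dist A B)) • B
        + (dist A B / (dist B C + dist C A + dist A B)) • C :=
  inv_smul_add_smul_add_smul A B C _ _ _

theorem excenterPt_rotate_eq_barycentric :
    excenterPt B C A =
      (dist B C / (-dist C A + dist A B + dist B C)) • A
        + (-dist C A / (-dist C A + dist A B + dist B C)) • B
        + (dist A B / (-dist C A + dist A B + dist B C)) • C := by
  rw [excenterPt_eq_barycentric]
  abel

theorem excenterPt_swap : excenterPt A C B = excenterPt A B C := by
  rw [excenterPt, excenterPt, dist_comm C B, dist_comm B A, dist_comm A C, add_right_comm,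
    add_right_comm (-dist B C • A)]

theorem dist_excenterPt_left_sq (hA : -dist B C + dist C A + dist A B ≠ 0) :
    dist (excenterPt A B C) A ^ 2 =
      dist C A * dist A B * (dist B C + dist C A + dist A B) /
        (-dist B C + dist C A + dist A B) := by
  rw [dist_sq_of_barycentric (excenterPt_eq_barycentric A B C)
    (by simp : A = (1 : ℝ) • A + (0 : ℝ) • B + (0 : ℝ) • C) (by field_simp) (by norm_num)]
  field_simp
  ring

theorem dist_excenterPt_right_sq (hA : -dist B C + dist C A + dist A B ≠ 0) :
    dist (excenterPt A B C) C ^ 2 =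
      dist B C * dist C A * (dist B C - dist C A + dist A B) /
        (-dist B C + dist C A + dist A B) := by
  rw [dist_sq_of_barycentric (excenterPt_eq_barycentric A B C)
    (by simp : C = (0 : ℝ) • A + (0 : ℝ) • B + (1 : ℝ) • C) (by field_simp) (by norm_num)]
  field_simp
  ring

theorem dist_excenterPt_incenterPt_sq (hA : -dist B C + dist C A + dist A B ≠ 0)
    (hs : dist B C + dist C A + dist A B ≠ 0) :
    dist (excenterPt A B C) (incenterPt A B C) ^ 2 =
      4 * dist B C ^ 2 * dist C A * dist A B /
        ((-dist B C + dist C A + dist A B) * (dist B C + dist C A + dist A B)) := by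
  rw [dist_sq_of_barycentric (excenterPt_eq_barycentric A B C)
    (incenterPt_eq_barycentric A B C) (by field_simp) (by field_simp)]
  field_simp
  ring

theorem dist_excenterPt_excenterPt_rotate_sq (hA : -dist B C + dist C A + dist A B ≠ 0)
    (hB : -dist C A + dist A B + dist B C ≠ 0) :
    dist (excenterPt A B C) (excenterPt B C A) ^ 2 =
      4 * dist B C * dist C A * dist A B ^ 2 /
        ((-dist B C + dist C A + dist A B) * (-dist C A + dist A B + dist B C)) := by
  rw [dist_sq_of_barycentric (excenterPt_eq_barycentric A B C)
    (excenterPt_rotate_eq_barycentric A B C) (by field_simp) (by field_simp; ring)]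
  field_simp
  ring

theorem dist_excenterPt_mul_dist_incenterPt (hA : 0 < -dist B C + dist C A + dist A B)
    (hs : dist B C + dist C A + dist A B ≠ 0) :
    dist (excenterPt A B C) A * dist (excenterPt A B C) (incenterPt A B C) =
      2 * dist B C * dist C A * dist A B / (-dist B C + dist C A + dist A B) := by
  rw [← sq_eq_sq₀ (by positivity) (div_nonneg (by positivity) hA.le), mul_pow,
    dist_excenterPt_left_sq A B C hA.ne', dist_excenterPt_incenterPt_sq A B C hA.ne' hs]
  field_simp
  ring

theorem dist_excenterPt_rotate_mul_dist_excenterPt (hA : 0 < -dist B C + dist C A + dist A B)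
    (hB : -dist C A + dist A B + dist B C ≠ 0) :
    dist (excenterPt A B C) (excenterPt B C A) * dist (excenterPt A B C) C =
      2 * dist B C * dist C A * dist A B / (-dist B C + dist C A + dist A B) := by
  rw [← sq_eq_sq₀ (by positivity) (div_nonneg (by positivity) hA.le), mul_pow,
    dist_excenterPt_excenterPt_rotate_sq A B C hA.ne' hB, dist_excenterPt_right_sq A B C hA.ne']
  field_simp
  ring

end Triangle

/-- The power-of-a-point identities at the excenter `E_A`:
`|E_A E_B|·|E_A C| = |E_A A|·|E_A I| = |E_A E_C|·|E_A B|`. -/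
theorem power_of_point_at_excenter (A B C : EuclideanSpace ℝ (Fin 2))
    (h : AffineIndependent ℝ ![A, B, C])
    (I : EuclideanSpace ℝ (Fin 2)) (hI : I = incenterPt A B C)
    (EA : EuclideanSpace ℝ (Fin 2)) (hEA : EA = excenterPt A B C)
    (EB : EuclideanSpace ℝ (Fin 2)) (hEB : EB = excenterPt B C A)
    (EC : EuclideanSpace ℝ (Fin 2)) (hEC : EC = excenterPt C A B) :
    dist EA EB * dist EA C = dist EA A * dist EA I ∧
    dist EA A * dist EA I = dist EA EC * dist EA B := by
  subst hI hEA hEB hEC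
  have hABC : ¬ Collinear ℝ {A, B, C} := affineIndependent_iff_not_collinear_set.1 h
  have hBCA : ¬ Collinear ℝ {B, C, A} := by rwa [Set.pair_comm C A, Set.insert_comm B A]
  have hCAB : ¬ Collinear ℝ {C, A, B} := by rwa [Set.insert_comm C A, Set.pair_comm C B]
  have hb := dist_lt_dist_add_dist_of_not_collinear hABC
  have hc := dist_lt_dist_add_dist_of_not_collinear hBCA
  have ha := dist_lt_dist_add_dist_of_not_collinear hCAB
  simp only [dist_comm B A, dist_comm C B, dist_comm A C] at ha hb hc
  have hA : 0 < -dist B C + dist C A + dist A B := by linarith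
  have hs : dist B C + dist C A + dist A B ≠ 0 := by linarith
  refine ⟨(dist_excenterPt_rotate_mul_dist_excenterPt A B C hA (by linarith)).trans
    (dist_excenterPt_mul_dist_incenterPt A B C hA hs).symm, ?_⟩
  rw [dist_excenterPt_mul_dist_incenterPt A B C hA hs, ← excenterPt_swap, ← excenterPt_swap C,
    dist_excenterPt_rotate_mul_dist_excenterPt A C B] <;>
    rw [dist_comm C B, dist_comm B A, dist_comm A C]
  · ring
  · linarith
  · linarith
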